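/- The map sending a misère-Nim position x to the pair (nim-sum of x, whether x contains a pile of size ≥ 2) is a monoid homomorphism from the free commutative monoid of positions to the product of (ℕ, XOR) with the two-element join-semilattice B₁ = ({false,true}, ∨), and the misère-Nim outcome of a position is determined by this pair. -/

import Mathlib

instance : Std.Commutative (α := ℕ) (· ^^^ ·) := ⟨Nat.xor_comm⟩
instance : Std.Associative (α := ℕ) (· ^^^ ·) := ⟨Nat.xor_assoc⟩

/-- The nim-sum (bitwise XOR) of a finite multiset of pile sizes. -/
def nimSum (s : Multiset ℕ) : ℕ := Multiset.fold (· ^^^ ·) 0 s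

/-- A move in Nim: remove a positive number of counters from a single pile. -/
def NimMove (s t : Multiset ℕ) : Prop :=
  ∃ a ∈ s, ∃ b < a, t = b ::ₘ s.erase a

mutual
inductive MiserePPos : Multiset ℕ → Prop
  | mk (s : Multiset ℕ) : (∃ t, NimMove s t) →
      (∀ t, NimMove s t → MisereNPos t) → MiserePPos s

inductive MisereNPos : Multiset ℕ → Prop
  | stuck (s : Multiset ℕ) : (∀ t, ¬ NimMove s t) → MisereNPos s
  | mk (s t : Multiset ℕ) : NimMove s t → MiserePPos t → MisereNPos s
end

/-- `Large s` : the position contains a pile of size at least 2. -/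
def Large (s : Multiset ℕ) : Prop := ∃ a ∈ s, 2 ≤ a

/-! Bouton's analysis of misère Nim: call a position *good* (`BoutonMisereP`) when either some
pile is at least 2 and the nim-sum is 0, or all piles are at most 1 and the nim-sum is 1. Every
good position has a move, every move from a good position leads to a bad one, and every bad
position that has a move can be moved to a good one; since moves decrease the total number of
counters, the good positions are exactly the misère P-positions. Goodness depends only on the pair
`(nimSum s, Large s)`, and both components are additive, `nimSum` because XOR is associative and
commutative. -/

open Multiset

theorem nimSum_cons (a : ℕ) (s : Multiset ℕ) : nimSum (a ::ₘ s) = a ^^^ nimSum s :=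
  fold_cons_left _ _ _ _

theorem nimSum_add (s t : Multiset ℕ) : nimSum (s + t) = nimSum s ^^^ nimSum t :=
  fold_add (α := ℕ) (· ^^^ ·) 0 0 s t

theorem nimSum_erase {a : ℕ} {s : Multiset ℕ} (ha : a ∈ s) :
    nimSum (s.erase a) = a ^^^ nimSum s := by
  rw [← cons_erase ha, nimSum_cons, erase_cons_head, Nat.xor_xor_cancel_left]

theorem nimSum_cons_erase {a : ℕ} {s : Multiset ℕ} (b : ℕ) (ha : a ∈ s) :
    nimSum (b ::ₘ s.erase a) = b ^^^ a ^^^ nimSum s := by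
  rw [nimSum_cons, nimSum_erase ha, Nat.xor_assoc]

theorem nimSum_lt_two_pow {s : Multiset ℕ} {n : ℕ} (h : ∀ a ∈ s, a < 2 ^ n) :
    nimSum s < 2 ^ n := by
  induction s using Multiset.induction with
  | empty => exact Nat.two_pow_pos n
  | cons a s ih =>
    rw [nimSum_cons]
    exact Nat.xor_lt_two_pow (h a (mem_cons_self a s)) (ih fun b hb => h b (mem_cons_of_mem hb))

theorem exists_mem_xor_lt_of_lt_nimSum {x : ℕ} {s : Multiset ℕ} (h : x < nimSum s) :
    ∃ a ∈ s, x ^^^ nimSum s ^^^ a < a := by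
  induction s using Multiset.induction generalizing x with
  | empty => exact absurd h (Nat.not_lt_zero x)
  | cons a s ih =>
    rw [nimSum_cons] at h ⊢
    rcases Nat.lt_xor_cases h with ha | hs
    · exact ⟨a, mem_cons_self a s, by rwa [Nat.xor_assoc x, Nat.xor_comm a, Nat.xor_xor_cancel_right]⟩
    · obtain ⟨b, hb, hlt⟩ := ih hs
      exact ⟨b, mem_cons_of_mem hb, by rwa [← Nat.xor_assoc]⟩

theorem exists_nimMove_nimSum_eq_of_lt {x : ℕ} {s : Multiset ℕ} (h : x < nimSum s) :
    ∃ a ∈ s, ∃ b < a, nimSum (b ::ₘ s.erase a) = x := by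
  obtain ⟨a, ha, hlt⟩ := exists_mem_xor_lt_of_lt_nimSum h
  refine ⟨a, ha, _, hlt, ?_⟩
  rw [nimSum_cons_erase _ ha, Nat.xor_right_comm (x ^^^ _), Nat.xor_xor_cancel_right,
    Nat.xor_xor_cancel_right]

theorem NimMove.sum_lt {s t : Multiset ℕ} (h : NimMove s t) : t.sum < s.sum := by
  obtain ⟨a, ha, b, hb, rfl⟩ := h
  have := congrArg sum (cons_erase ha)
  rw [sum_cons] at this ⊢
  omega

theorem nimMove_zero_cons_erase {a : ℕ} {s : Multiset ℕ} (ha : a ∈ s) (ha0 : 0 < a) :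
    NimMove s (0 ::ₘ s.erase a) :=
  ⟨a, ha, 0, ha0, rfl⟩

theorem large_cons {a : ℕ} {s : Multiset ℕ} : Large (a ::ₘ s) ↔ 2 ≤ a ∨ Large s := by
  simp [Large]

theorem large_add {s t : Multiset ℕ} : Large (s + t) ↔ Large s ∨ Large t := by
  simp only [Large, mem_add, or_and_right, exists_or]

theorem not_large_iff {s : Multiset ℕ} : ¬ Large s ↔ ∀ a ∈ s, a < 2 := by
  simp [Large]

theorem Large.of_erase {a : ℕ} {s : Multiset ℕ} (h : Large (s.erase a)) : Large s :=
  let ⟨c, hc, hc2⟩ := h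
  ⟨c, mem_of_mem_erase hc, hc2⟩

theorem two_le_of_large_of_not_large_erase {a : ℕ} {s : Multiset ℕ} (hs : Large s)
    (h : ¬ Large (s.erase a)) : 2 ≤ a := by
  obtain ⟨c, hc, hc2⟩ := hs
  by_contra hac
  exact h ⟨c, (mem_erase_of_ne (by omega)).2 hc, hc2⟩

theorem nimSum_lt_two_of_not_large {s : Multiset ℕ} (h : ¬ Large s) : nimSum s < 2 :=
  nimSum_lt_two_pow (n := 1) (not_large_iff.1 h)

theorem MiserePPos.not_misereNPos {s : Multiset ℕ} (h : MiserePPos s) : ¬ MisereNPos s :=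
  MiserePPos.rec (motive_1 := fun s _ => ¬ MisereNPos s) (motive_2 := fun s _ => ¬ MiserePPos s)
    (fun _ ⟨t, hst⟩ _ ih hN => match hN with
      | .stuck _ hstuck => hstuck t hst
      | .mk _ t hst hPt => ih t hst hPt)
    (fun _ hstuck hP => match hP with
      | .mk _ ⟨t, hst⟩ _ => hstuck t hst)
    (fun _ t hst _ ih hP => match hP with
      | .mk _ _ hN => ih (hN t hst))
    h

theorem miserePPos_iff_of_closed (G : Multiset ℕ → Prop)
    (exists_move : ∀ s, G s → ∃ t, NimMove s t)
    (move_not_mem : ∀ s t, G s → NimMove s t → ¬ G t)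
    (exists_move_mem : ∀ s, ¬ G s → (∃ t, NimMove s t) → ∃ t, NimMove s t ∧ G t)
    (s : Multiset ℕ) : MiserePPos s ↔ G s := by
  have key : ∀ s, (G s → MiserePPos s) ∧ (¬ G s → MisereNPos s) := by
    intro s
    induction hn : s.sum using Nat.strong_induction_on generalizing s with
    | _ n ih =>
      have ih' : ∀ t, NimMove s t → (G t → MiserePPos t) ∧ (¬ G t → MisereNPos t) :=
        fun t hst => ih _ (hn ▸ hst.sum_lt) t rfl
      refine ⟨fun hs => .mk s (exists_move s hs) fun t hst => ?_, fun hs => ?_⟩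
      · exact (ih' t hst).2 (move_not_mem s t hs hst)
      · by_cases hmove : ∃ t, NimMove s t
        · obtain ⟨t, hst, ht⟩ := exists_move_mem s hs hmove
          exact .mk s t hst ((ih' t hst).1 ht)
        · exact .stuck s (not_exists.1 hmove)
  exact ⟨fun hP => by_contra fun hs => hP.not_misereNPos ((key s).2 hs), (key s).1⟩

/-- Bouton's criterion for misère P-positions. When all piles are at most 1 the nim-sum is the
parity of the number of 1-piles, so the second disjunct says that this number is odd. -/
def BoutonMisereP (s : Multiset ℕ) : Prop :=
  (Large s ∧ nimSum s = 0) ∨ (¬ Large s ∧ nimSum s = 1)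

theorem BoutonMisereP.exists_nimMove {s : Multiset ℕ} (hs : BoutonMisereP s) :
    ∃ t, NimMove s t := by
  rcases hs with ⟨⟨a, ha, ha2⟩, -⟩ | ⟨-, h1⟩
  · exact ⟨_, nimMove_zero_cons_erase ha (by omega)⟩
  · obtain ⟨a, ha, b, hb, -⟩ := exists_nimMove_nimSum_eq_of_lt (x := 0) (s := s) (by omega)
    exact ⟨_, ⟨a, ha, b, hb, rfl⟩⟩

theorem BoutonMisereP.not_of_nimMove {s t : Multiset ℕ} (hs : BoutonMisereP s)
    (hst : NimMove s t) : ¬ BoutonMisereP t := by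
  obtain ⟨a, ha, b, hb, rfl⟩ := hst
  have hsum := nimSum_cons_erase b ha
  rcases hs with ⟨hL, h0⟩ | ⟨hL, h1⟩
  · rw [h0, Nat.xor_zero] at hsum
    have hba : b ^^^ a ≠ 0 := Nat.xor_ne_zero_iff.2 hb.ne
    rintro (⟨-, ht⟩ | ⟨hLt, -⟩)
    · exact hba (hsum ▸ ht)
    -- Only `a` was large, and it is the nim-sum of the remaining small piles.
    · have hLe : ¬ Large (s.erase a) := fun h => hLt (large_cons.2 (.inr h))
      have ha2 := two_le_of_large_of_not_large_erase hL hLe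
      have := nimSum_lt_two_of_not_large hLe
      rw [nimSum_erase ha, h0, Nat.xor_zero] at this
      omega
  · have ha1 : a = 1 := by have := not_large_iff.1 hL a ha; omega
    obtain rfl : b = 0 := by omega
    subst ha1
    rw [h1] at hsum
    rintro (⟨hLt, -⟩ | ⟨-, ht⟩)
    · exact hL ((large_cons.1 hLt).resolve_left (by omega)).of_erase
    · rw [hsum] at ht
      exact absurd ht (by decide)

theorem BoutonMisereP.exists_nimMove_of_not {s : Multiset ℕ} (hs : ¬ BoutonMisereP s)
    (hmove : ∃ t, NimMove s t) : ∃ t, NimMove s t ∧ BoutonMisereP t := by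
  by_cases hL : Large s
  · obtain ⟨a, ha, b, hb, h0⟩ := exists_nimMove_nimSum_eq_of_lt (x := 0)
      (Nat.pos_of_ne_zero fun h => hs (.inl ⟨hL, h⟩))
    by_cases hLt : Large (b ::ₘ s.erase a)
    · exact ⟨_, ⟨a, ha, b, hb, rfl⟩, .inl ⟨hLt, h0⟩⟩
    -- `a` is the only large pile: reduce it so as to leave an odd number of 1-piles.
    · have hLe : ¬ Large (s.erase a) := fun h => hLt (large_cons.2 (.inr h))
      have ha2 := two_le_of_large_of_not_large_erase hL hLe
      have hp := nimSum_lt_two_of_not_large hLe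
      have hb' : 1 ^^^ nimSum (s.erase a) < 2 := Nat.xor_lt_two_pow (n := 1) one_lt_two hp
      refine ⟨_, ⟨a, ha, 1 ^^^ nimSum (s.erase a), by omega, rfl⟩, .inr ⟨?_, ?_⟩⟩
      · exact large_cons.not.2 (not_or.2 ⟨by omega, hLe⟩)
      · rw [nimSum_cons, Nat.xor_xor_cancel_right]
  · have h0 : nimSum s = 0 := by
      have := nimSum_lt_two_of_not_large hL
      have : nimSum s ≠ 1 := fun h => hs (.inr ⟨hL, h⟩)
      omega
    obtain ⟨_, a, ha, b, hb, -⟩ := hmove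
    have ha1 : a = 1 := by have := not_large_iff.1 hL a ha; omega
    subst ha1
    refine ⟨_, nimMove_zero_cons_erase ha one_pos, .inr ⟨?_, ?_⟩⟩
    · exact large_cons.not.2 (not_or.2 ⟨by omega, fun h => hL h.of_erase⟩)
    · rw [nimSum_cons_erase 0 ha, h0]
      rfl

theorem miserePPos_iff_boutonMisereP (s : Multiset ℕ) : MiserePPos s ↔ BoutonMisereP s :=
  miserePPos_iff_of_closed BoutonMisereP (fun _ => BoutonMisereP.exists_nimMove)
    (fun _ _ => BoutonMisereP.not_of_nimMove) (fun _ => BoutonMisereP.exists_nimMove_of_not) s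

/-- The map `s ↦ (nimSum s, Large s)` is a homomorphism from the monoid of
positions (multisets under union) to `(ℕ, XOR) × B₁` (where `B₁` is the
two-element join-semilattice, addition being "or"), and the misère-Nim outcome
is determined by this pair. -/
theorem stmt5 :
    (∀ s t : Multiset ℕ, nimSum (s + t) = nimSum s ^^^ nimSum t) ∧
    (∀ s t : Multiset ℕ, Large (s + t) ↔ Large s ∨ Large t) ∧
    (∀ s t : Multiset ℕ, nimSum s = nimSum t → (Large s ↔ Large t) →
      (MiserePPos s ↔ MiserePPos t)) := by
  refine ⟨nimSum_add, fun _ _ => large_add, fun s t hsum hlarge => ?_⟩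
  rw [miserePPos_iff_boutonMisereP, miserePPos_iff_boutonMisereP, BoutonMisereP,
    BoutonMisereP, hsum, hlarge]
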